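/- arXiv:1101.1490 — 3 statements merged into one kernel-verified Lean document; each statement's English description precedes it below -/
import Mathlib

section
/- Let φ be the morphism φ(A) = A^p B, φ(B) = A^q B with p > q ≥ 1. Define words w^(0) = B and w^(n) = B·φ(w^(n-1)) for n ≥ 1. Then every w^(N) is a palindrome. -/
/-- Number of occurrences of the letter `A` (encoded as `false`). -/
def countA (w : List Bool) : ℕ := w.count false

/-- Number of occurrences of the letter `B` (encoded as `true`). -/
def countB (w : List Bool) : ℕ := w.count true

/-- Extension of a morphism (given on letters) to finite words. -/
def applyM (φ : Bool → List Bool) (w : List Bool) : List Bool := (w.map φ).flatten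

/-- `w` is a factor of the infinite word `u`. -/
def IsFactor (u : ℕ → Bool) (w : List Bool) : Prop :=
  ∃ i, w = (List.range w.length).map (fun j => u (i + j))

/-- The prefix of length `n` of the infinite word `u`. -/
def prefWord (u : ℕ → Bool) (n : ℕ) : List Bool := (List.range n).map u

/-- The finite word `w` is a prefix of the infinite word `u`. -/
def IsPrefixOf (w : List Bool) (u : ℕ → Bool) : Prop := w = prefWord u w.length

/-- Abelian complexity: number of Parikh vectors of factors of length `n`. -/
noncomputable def AC (u : ℕ → Bool) (n : ℕ) : ℕ :=
  Set.ncard {P : ℕ × ℕ | ∃ w, IsFactor u w ∧ w.length = n ∧ P = (countA w, countB w)}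

/-- `n`-fold iterate of the morphism `φ` applied to the letter `a`. -/
def iterW (φ : Bool → List Bool) (n : ℕ) (a : Bool) : List Bool := (applyM φ)^[n] [a]

/-- The morphism `A ↦ AᵖB, B ↦ A^q` (simple Parry case). -/
def simpleM (p q : ℕ) : Bool → List Bool
  | false => List.replicate p false ++ [true]
  | true  => List.replicate q false

/-- The morphism `A ↦ AᵖB, B ↦ A^qB` (non-simple Parry case). -/
def nonsimpleM (p q : ℕ) : Bool → List Bool
  | false => List.replicate p false ++ [true]
  | true  => List.replicate q false ++ [true]

/-- Greedy digits `(d_N, …, d_0)` of `x` in the base given by `U`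
    (assuming `U 0 = 1`): `d_j = ⌊x_j / U_j⌋`, `x_{j-1} = x_j mod U_j`. -/
def gdigits (U : ℕ → ℕ) : ℕ → ℕ → List ℕ
  | 0, x => [x]
  | j+1, x => x / U (j+1) :: gdigits U j (x % U (j+1))

/-- The digit `d_j` of the normal `U`-representation `(d_N, …, d_0)` of `n`. -/
def dig (U : ℕ → ℕ) (N n j : ℕ) : ℕ := (gdigits U N n).getD (N - j) 0

/-- The words `w⁽ⁿ⁾` of the non-simple Parry case: `w⁽⁰⁾ = B`, `w⁽ⁿ⁾ = B·φ(w⁽ⁿ⁻¹⁾)`. -/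
def wNon (φ : Bool → List Bool) : ℕ → List Bool
  | 0 => [true]
  | n+1 => true :: applyM φ (wNon φ n)

/-- The words `w⁽ᴺ⁾ = B·φ(A^{q-1})·φ³(A^{q-1})⋯φ^{2N-1}(A^{q-1})` of the simple Parry case. -/
def wSim (φ : Bool → List Bool) (q : ℕ) (N : ℕ) : List Bool :=
  true :: ((List.range N).map
    (fun k => (applyM φ)^[2*k+1] (List.replicate (q-1) false))).flatten

lemma cons_applyM_reverse (φ : Bool → List Bool) (b : Bool)
    (hφ : ∀ a, b :: φ a = (φ a).reverse ++ [b]) (w : List Bool) :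
    b :: applyM φ w.reverse = (applyM φ w).reverse ++ [b] := by
  induction w with
  | nil => rfl
  | cons a w ih =>
    calc b :: applyM φ (a :: w).reverse
        = (b :: applyM φ w.reverse) ++ φ a := by simp [applyM]
      _ = (applyM φ w).reverse ++ (b :: φ a) := by rw [ih]; simp
      _ = (applyM φ (a :: w)).reverse ++ [b] := by rw [hφ]; simp [applyM]

lemma wNon_reverse (φ : Bool → List Bool) (hφ : ∀ a, true :: φ a = (φ a).reverse ++ [true])
    (N : ℕ) : (wNon φ N).reverse = wNon φ N := by
  induction N with
  | zero => rfl
  | succ n ih =>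
    calc (true :: applyM φ (wNon φ n)).reverse
        = (applyM φ (wNon φ n)).reverse ++ [true] := List.reverse_cons
      _ = true :: applyM φ (wNon φ n).reverse := (cons_applyM_reverse φ true hφ _).symm
      _ = true :: applyM φ (wNon φ n) := by rw [ih]

lemma cons_nonsimpleM (p q : ℕ) (a : Bool) :
    true :: nonsimpleM p q a = (nonsimpleM p q a).reverse ++ [true] := by
  cases a <;> simp [nonsimpleM]

theorem stmt5_general (p q : ℕ) (N : ℕ) :
    (wNon (nonsimpleM p q) N).reverse = wNon (nonsimpleM p q) N :=
  wNon_reverse _ (cons_nonsimpleM p q) N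

/-- each `w⁽ᴺ⁾` (non-simple case) is a palindrome. -/
theorem stmt5 (p q : ℕ) (hq : 1 ≤ q) (hpq : q < p) (N : ℕ) :
    (wNon (nonsimpleM p q) N).reverse = wNon (nonsimpleM p q) N :=
  stmt5_general p q N
end

section
/- Let φ be the morphism φ(A) = A^p B, φ(B) = A^q B with p > q ≥ 1. Define w^(0) = B and w^(n) = B·φ(w^(n-1)) for n ≥ 1. Then for every N ≥ 0, the word w^(N) is a proper suffix of φ^{N+1}(A); that is, φ^{N+1}(A) = u · w^(N) for some nonempty word u. -/
/-! Every letter image `φ a` has the shape `v ++ [B]` with `v` nonempty. Hence if `x = u ++ w` with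
`u` nonempty, then `φ x = u' ++ B :: φ w` with `u'` nonempty, which turns a factorisation
`φ^{N+1}(A) = u ++ w⁽ᴺ⁾` into `φ^{N+2}(A) = u' ++ w⁽ᴺ⁺¹⁾`. -/

theorem applyM_append (φ : Bool → List Bool) (x y : List Bool) :
    applyM φ (x ++ y) = applyM φ x ++ applyM φ y := by
  simp [applyM]

theorem exists_applyM_eq_append_true {φ : Bool → List Bool}
    (hφ : ∀ a, ∃ v : List Bool, v ≠ [] ∧ φ a = v ++ [true]) {u : List Bool} (hu : u ≠ []) :
    ∃ u' : List Bool, u' ≠ [] ∧ applyM φ u = u' ++ [true] := by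
  obtain ⟨t, a, rfl⟩ := (List.eq_nil_or_concat' u).resolve_left hu
  obtain ⟨v, hv, hφa⟩ := hφ a
  exact ⟨applyM φ t ++ v, by simp [hv], by simp [applyM, hφa]⟩

theorem exists_iterW_succ_eq_append_wNon {φ : Bool → List Bool}
    (hφ : ∀ a, ∃ v : List Bool, v ≠ [] ∧ φ a = v ++ [true]) (a : Bool) (N : ℕ) :
    ∃ u : List Bool, u ≠ [] ∧ iterW φ (N+1) a = u ++ wNon φ N := by
  induction N with
  | zero =>
    obtain ⟨v, hv, hφa⟩ := hφ a
    exact ⟨v, hv, by simp [iterW, applyM, wNon, hφa]⟩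
  | succ N ih =>
    obtain ⟨u, hu, hiter⟩ := ih
    obtain ⟨u', hu', hφu⟩ := exists_applyM_eq_append_true hφ hu
    refine ⟨u', hu', ?_⟩
    calc iterW φ (N+1+1) a = applyM φ (iterW φ (N+1) a) :=
          Function.iterate_succ_apply' _ _ _
      _ = u' ++ wNon φ (N+1) := by simp [hiter, applyM_append, hφu, wNon]

theorem nonsimpleM_eq_append_true {p q : ℕ} (hp : p ≠ 0) (hq : q ≠ 0) (a : Bool) :
    ∃ v : List Bool, v ≠ [] ∧ nonsimpleM p q a = v ++ [true] := by
  cases a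
  · exact ⟨List.replicate p false, by simpa using hp, rfl⟩
  · exact ⟨List.replicate q false, by simpa using hq, rfl⟩

/-- `w⁽ᴺ⁾` is a proper suffix of `φ^{N+1}(A)` (non-simple case). -/
theorem stmt6 (p q : ℕ) (hq : 1 ≤ q) (hpq : q < p) (N : ℕ) :
    ∃ u : List Bool, u ≠ [] ∧
      iterW (nonsimpleM p q) (N+1) false = u ++ wNon (nonsimpleM p q) N :=
  exists_iterW_succ_eq_append_wNon
    (nonsimpleM_eq_append_true (by omega) (by omega)) false N
end

section
/- Let φ be the morphism φ(A) = A^p B, φ(B) = A^q B with p > q ≥ 1, and let u_β = lim φ^n(A) be its fixed point. Let U_n = |φ^n(A)|. If n has normal U-representation (d_N, …, d_1, d_0), i.e., n = Σ_{j=0}^N d_j U_j via the greedy algorithm, then the prefix of u_β of length n equals (φ^N(A))^{d_N} (φ^{N-1}(A))^{d_{N-1}} ⋯ (φ(A))^{d_1} A^{d_0}, and the number of B's in this prefix is Σ_{j=1}^N d_j U_{j-1}. -/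
/-!
Write `k_A = p`, `k_B = q`. Then `φ^{N+1}(a) = φ^N(A)^{k_a} φ^N(B)` for both letters `a`, and
`|φ^N(B)| ≤ |φ^N(A)|` because `q ≤ p`. So for `x < |φ^{N+1}(a)|` the greedy algorithm takes at
most `k_a` copies of `φ^N(A)`, and if it takes exactly `k_a` of them the remainder is shorter than
`φ^N(B)`; by induction on `N` the greedy word of `x` is a prefix of `φ^{N+1}(a)`, hence of `u_β`.
Every image of a letter ends in exactly one `B`, which gives `|φ^{j+1}(A)|_B = |φ^j(A)| = U_j`.
-/

section Morphism

variable (φ : Bool → List Bool)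

lemma applyM_applyM (ψ : Bool → List Bool) (w : List Bool) :
    applyM φ (applyM ψ w) = applyM (fun a => applyM φ (ψ a)) w := by
  simp only [applyM, ← List.flatMap_def, List.flatMap_assoc]

lemma iterate_applyM (n : ℕ) (w : List Bool) : (applyM φ)^[n] w = applyM (iterW φ n) w := by
  induction n with
  | zero =>
    show w = applyM (fun a => [a]) w
    rw [applyM, ← List.flatMap_def, List.flatMap_singleton']
  | succ n ih =>
    rw [Function.iterate_succ_apply', ih, applyM_applyM]
    congr 1
    funext a
    exact (Function.iterate_succ_apply' _ n [a]).symm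

lemma iterW_succ (n : ℕ) (a : Bool) : iterW φ (n + 1) a = applyM (iterW φ n) (φ a) := by
  rw [iterW, Function.iterate_succ_apply, iterate_applyM]
  simp [applyM]

end Morphism

lemma dig_succ_self (U : ℕ → ℕ) (N x : ℕ) : dig U (N + 1) x (N + 1) = x / U (N + 1) := by
  simp [dig, gdigits]

lemma dig_succ_of_le (U : ℕ → ℕ) {N j : ℕ} (x : ℕ) (hj : j ≤ N) :
    dig U (N + 1) x j = dig U N (x % U (N + 1)) j := by
  simp [dig, gdigits, show N + 1 - j = N - j + 1 by omega]

section Greedy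

variable {α : Type*} (w : ℕ → List α)

def greedyWord (N n : ℕ) : List α :=
  ((List.range (N + 1)).reverse.map fun j =>
    (List.replicate (dig (fun j => (w j).length) N n j) (w j)).flatten).flatten

lemma greedyWord_zero (n : ℕ) : greedyWord w 0 n = (List.replicate n (w 0)).flatten := by
  simp [greedyWord, dig, gdigits]

lemma greedyWord_succ (N n : ℕ) :
    greedyWord w (N + 1) n =
      (List.replicate (n / (w (N + 1)).length) (w (N + 1))).flatten ++
        greedyWord w N (n % (w (N + 1)).length) := by
  rw [greedyWord, List.range_succ, List.reverse_append, List.map_append, List.flatten_append]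
  congr 1
  · simp [dig_succ_self]
  · refine congrArg List.flatten (List.map_congr_left fun j hj => ?_)
    rw [dig_succ_of_le _ _ (by simpa [Nat.lt_succ_iff] using hj)]

lemma length_greedyWord (hw : (w 0).length = 1) (N n : ℕ) : (greedyWord w N n).length = n := by
  induction N generalizing n with
  | zero => simp [greedyWord_zero, hw]
  | succ N ih => simp [greedyWord_succ, ih, Nat.div_add_mod']

end Greedy

lemma countB_greedyWord (w : ℕ → List Bool) (N n : ℕ) :
    countB (greedyWord w N n) =
      ∑ j ∈ Finset.range (N + 1), dig (fun j => (w j).length) N n j * countB (w j) := by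
  simp only [greedyWord, countB, List.count_flatten, List.map_map, Function.comp_def,
    List.map_replicate, List.sum_replicate, smul_eq_mul]
  rw [List.map_reverse, List.sum_reverse, Finset.sum_eq_multiset_sum, Finset.range_val,
    Multiset.range, Multiset.map_coe, Multiset.sum_coe]

lemma flatten_replicate_append_prefix {α : Type*} {w s t : List α} {d e : ℕ} (hde : d ≤ e)
    (hlt : d < e → s <+: w) (heq : d = e → s <+: t) :
    (List.replicate d w).flatten ++ s <+: (List.replicate e w).flatten ++ t := by
  obtain rfl | hde := hde.eq_or_lt
  · exact (List.prefix_append_right_inj _).2 (heq rfl)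
  · obtain ⟨r, rfl⟩ := Nat.exists_eq_add_of_lt hde
    rw [add_assoc, List.replicate_add, List.flatten_append, List.append_assoc]
    refine (List.prefix_append_right_inj _).2 ((hlt hde).trans ?_)
    simp only [List.replicate_succ, List.flatten_cons, List.append_assoc]
    exact List.prefix_append _ _

lemma IsPrefixOf.of_prefix {u : ℕ → Bool} {v w : List Bool} (hw : IsPrefixOf w u) (hvw : v <+: w) :
    IsPrefixOf v u := by
  have hle := hvw.length_le
  rw [IsPrefixOf, List.prefix_iff_eq_take.1 hvw, List.length_take, Nat.min_eq_left hle, hw,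
    prefWord, ← List.map_take, List.take_range, prefWord]
  simp [hle]

section NonSimple

variable (p q : ℕ)

lemma nonsimpleM_eq (a : Bool) :
    nonsimpleM p q a = List.replicate (bif a then q else p) false ++ [true] := by
  cases a <;> rfl

lemma iterW_nonsimpleM_succ (n : ℕ) (a : Bool) :
    iterW (nonsimpleM p q) (n + 1) a =
      (List.replicate (bif a then q else p) (iterW (nonsimpleM p q) n false)).flatten ++
        iterW (nonsimpleM p q) n true := by
  simp [iterW_succ, nonsimpleM_eq, applyM, List.map_replicate]

lemma length_iterW_nonsimpleM_succ (n : ℕ) (a : Bool) :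
    (iterW (nonsimpleM p q) (n + 1) a).length =
      (bif a then q else p) * (iterW (nonsimpleM p q) n false).length +
        (iterW (nonsimpleM p q) n true).length := by
  simp [iterW_nonsimpleM_succ]

lemma length_iterW_nonsimpleM_true_le {p q : ℕ} (hqp : q ≤ p) (n : ℕ) :
    (iterW (nonsimpleM p q) n true).length ≤ (iterW (nonsimpleM p q) n false).length := by
  cases n with
  | zero => simp [iterW]
  | succ n =>
    simp only [length_iterW_nonsimpleM_succ, cond_true, cond_false]
    gcongr

lemma countB_applyM_nonsimpleM (w : List Bool) : countB (applyM (nonsimpleM p q) w) = w.length := by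
  induction w with
  | nil => rfl
  | cons a w ih =>
    simp only [applyM, List.map_cons, List.flatten_cons, countB, List.count_append] at ih ⊢
    rw [ih, nonsimpleM_eq]
    simp [List.count_replicate, add_comm]

lemma countB_iterW_nonsimpleM_succ (n : ℕ) :
    countB (iterW (nonsimpleM p q) (n + 1) false) = (iterW (nonsimpleM p q) n false).length := by
  rw [iterW, Function.iterate_succ_apply', countB_applyM_nonsimpleM, iterW]

lemma greedyWord_iterW_prefix {p q : ℕ} (hqp : q ≤ p) (N : ℕ) (a : Bool) {x : ℕ}
    (hx : x < (iterW (nonsimpleM p q) (N + 1) a).length) :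
    greedyWord (fun j => iterW (nonsimpleM p q) j false) N x <+: iterW (nonsimpleM p q) (N + 1) a := by
  induction N generalizing a x with
  | zero =>
    rw [length_iterW_nonsimpleM_succ] at hx
    rw [greedyWord_zero, iterW_nonsimpleM_succ, ← List.append_nil (List.flatten _)]
    simp only [iterW, Function.iterate_zero, id, List.length_singleton, mul_one] at hx
    exact flatten_replicate_append_prefix (by omega) (fun _ => List.nil_prefix)
      (fun _ => List.nil_prefix)
  | succ N ih =>
    rw [greedyWord_succ, iterW_nonsimpleM_succ p q (N + 1) a]
    rw [length_iterW_nonsimpleM_succ] at hx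
    have hLB := length_iterW_nonsimpleM_true_le hqp (N + 1)
    set L := (iterW (nonsimpleM p q) (N + 1) false).length
    have hL : 0 < L := Nat.pos_of_ne_zero fun h => by rw [h] at hLB hx; omega
    have hdiv := Nat.div_add_mod' x L
    have hk : x / L ≤ (bif a then q else p) :=
      Nat.lt_succ_iff.1 ((Nat.div_lt_iff_lt_mul hL).2 (by rw [Nat.succ_mul]; omega))
    refine flatten_replicate_append_prefix hk (fun _ => ih false (Nat.mod_lt x hL)) fun heq => ?_
    refine ih true ?_
    rw [heq] at hdiv
    omega

end NonSimple

theorem stmt7_general (p q : ℕ) (hpq : q < p)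
    (φ : Bool → List Bool) (hφ : φ = nonsimpleM p q)
    (ub : ℕ → Bool) (hub : ∀ m, IsPrefixOf (iterW φ m false) ub)
    (U : ℕ → ℕ) (hU : ∀ m, U m = (iterW φ m false).length)
    (n N : ℕ) (hnN : n < U (N+1)) :
    prefWord ub n =
      ((List.range (N+1)).reverse.map
        (fun j => (List.replicate (dig U N n j) (iterW φ j false)).flatten)).flatten ∧
    countB (prefWord ub n) = ∑ j ∈ Finset.Icc 1 N, dig U N n j * U (j-1) := by
  subst hφ
  obtain rfl : U = fun m => (iterW (nonsimpleM p q) m false).length := funext hU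
  have hprefix := (hub (N + 1)).of_prefix (greedyWord_iterW_prefix hpq.le N false hnN)
  rw [IsPrefixOf, length_greedyWord _ rfl] at hprefix
  refine ⟨hprefix.symm, ?_⟩
  rw [← hprefix, countB_greedyWord, Finset.sum_range_succ', ← Finset.Ico_add_one_right_eq_Icc,
    Finset.sum_Ico_eq_sum_range]
  simp only [add_comm 1, Nat.add_sub_cancel, countB_iterW_nonsimpleM_succ]
  simp [countB, iterW]

/-- prefix structure of the fixed point `u_β` (non-simple case) via the
normal `U`-representation, and the `B`-count of prefixes. -/
theorem stmt7 (p q : ℕ) (hq : 1 ≤ q) (hpq : q < p)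
    (φ : Bool → List Bool) (hφ : φ = nonsimpleM p q)
    (ub : ℕ → Bool) (hub : ∀ m, IsPrefixOf (iterW φ m false) ub)
    (U : ℕ → ℕ) (hU : ∀ m, U m = (iterW φ m false).length)
    (n N : ℕ) (hn : 0 < n) (hnN : n < U (N+1)) :
    prefWord ub n =
      ((List.range (N+1)).reverse.map
        (fun j => (List.replicate (dig U N n j) (iterW φ j false)).flatten)).flatten ∧
    countB (prefWord ub n) = ∑ j ∈ Finset.Icc 1 N, dig U N n j * U (j-1) :=
  stmt7_general p q hpq φ hφ ub hub U hU n N hnN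
end
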